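/- Let (a_n) be an arithmetic sequence with ratios q_n, and x ∈ 𝕋 whose support supp(x) is q-bounded. Then x is a topological s-torsion element (a_n x → 0 statistically in 𝕋) if and only if (i) d((supp(x)+1) \ supp(x)) = 0 and (ii) d(supp(x) \ supp_q(x)) = 0. -/

import Mathlib

open Filter Topology Set

/-- Upper natural density of a set of naturals. -/
noncomputable def upperDensity (A : Set ℕ) : ℝ :=
  Filter.limsup (fun n => (Nat.card ↥(A ∩ Set.Iio n) : ℝ) / n) Filter.atTop

/-- `A` has natural density `δ`. -/
def HasDensity (A : Set ℕ) (δ : ℝ) : Prop :=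
  Filter.Tendsto (fun n => (Nat.card ↥(A ∩ Set.Iio n) : ℝ) / n) Filter.atTop (nhds δ)

/-- Statistical convergence of a real sequence. -/
def StatTendsto (x : ℕ → ℝ) (ξ : ℝ) : Prop :=
  ∀ ε : ℝ, 0 < ε → HasDensity {n | ε ≤ |x n - ξ|} 0

/-- An arithmetic sequence: `a 0 = 1 < a 1 < a 2 < ⋯` and `a n ∣ a (n+1)`. -/
def IsArithmeticSeq (a : ℕ → ℕ) : Prop :=
  a 0 = 1 ∧ StrictMono a ∧ ∀ n, a n ∣ a (n + 1)

/-- The ratio `q n = a n / a (n-1)` as a real number. -/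
noncomputable def qr (a : ℕ → ℕ) (n : ℕ) : ℝ := (a n : ℝ) / (a (n - 1) : ℝ)

/-- `(c n)` is a canonical representation sequence w.r.t. `(a n)`:
`0 ≤ c n < q n` and `c n < q n - 1` for infinitely many `n`. -/
def IsCanonicalRep (a : ℕ → ℕ) (c : ℕ → ℕ) : Prop :=
  c 0 = 0 ∧ (∀ n, 1 ≤ n → c n < a n / a (n - 1)) ∧
    (∀ N, ∃ n, N ≤ n ∧ 1 ≤ n ∧ c n + 1 < a n / a (n - 1))

/-- Support of (the canonical representation of) `x`. -/
def suppRep (c : ℕ → ℕ) : Set ℕ := {n | 1 ≤ n ∧ c n ≠ 0}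

/-- `supp_q(x) = {n : c n = q n - 1}`. -/
def suppqRep (a c : ℕ → ℕ) : Set ℕ := {n | 1 ≤ n ∧ c n + 1 = a n / a (n - 1)}

/-- A set `S ⊆ ℕ` is `q`-bounded if `(q n)` is bounded on `S`. -/
def QBounded (a : ℕ → ℕ) (S : Set ℕ) : Prop := ∃ M, ∀ n ∈ S, a n / a (n - 1) ≤ M

/-- A set `S ⊆ ℕ` is `q`-divergent if `q n → ∞` along `n ∈ S`. -/
def QDivergent (a : ℕ → ℕ) (S : Set ℕ) : Prop :=
  Filter.Tendsto (fun n => a n / a (n - 1)) (Filter.atTop ⊓ Filter.principal S) Filter.atTop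

/-- Statistical convergence in a topological space, via neighborhoods. -/
def StatNhdTendsto {α : Type*} [TopologicalSpace α] (y : ℕ → α) (ℓ : α) : Prop :=
  ∀ U ∈ nhds ℓ, HasDensity {n | y n ∉ U} 0

/-! Let `T m ∈ [0, 1]` be `a m` times the tail `∑_{k > m} c k / a k`, so that `a m • x = T m`
in `𝕋` and `q (m + 1) * T m = c (m + 1) + T (m + 1)`. Since `q ≥ 2`, a zero digit halves `T` and
a maximal digit `q - 1` halves `1 - T`: after `k` digits that are all zero or all maximal,
`a m • x` lies within `2⁻ᵏ` of `0`. If the ends of the runs of `supp x` (hence also their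
starts, which are at most one more) and the non-maximal digits of `supp x` have density zero,
then outside finitely many translates of a null set the next `k` digits avoid them, so
`a n • x → 0` statistically.
Conversely, a nonzero digit `c (m + 1)` with `c (m + 1) + T (m + 1) ≤ q (m + 1) - 1 / 2` keeps
`T m` at distance at least `1 / (2 q (m + 1))` from both `0` and `1`. This happens when `m + 1`
is a non-maximal support index, and when `m + 2` ends a run (then `T (m + 1) ≤ 1 / 2`);
`q`-boundedness of the support makes these distances uniform.
-/

open scoped symmDiff

section Density

open Classical

lemma natCard_inter_Iio_eq_count (A : Set ℕ) [DecidablePred (· ∈ A)] (n : ℕ) :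
    Nat.card ↥(A ∩ Iio n) = Nat.count (· ∈ A) n := by
  rw [Nat.count_eq_card_filter_range, Nat.card_coe_set_eq, ← Set.ncard_coe_finset]
  congr 1
  ext m
  simp [and_comm]

lemma hasDensity_zero_iff_count {A : Set ℕ} [DecidablePred (· ∈ A)] :
    HasDensity A 0 ↔ Tendsto (fun n => (Nat.count (· ∈ A) n : ℝ) / n) atTop (𝓝 0) := by
  simp only [HasDensity, natCard_inter_Iio_eq_count]

lemma hasDensity_zero_of_count_le_add {A B : Set ℕ} [DecidablePred (· ∈ A)]
    [DecidablePred (· ∈ B)] (hB : HasDensity B 0) (K : ℕ)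
    (h : ∀ n, Nat.count (· ∈ A) n ≤ Nat.count (· ∈ B) n + K) : HasDensity A 0 := by
  rw [hasDensity_zero_iff_count] at hB ⊢
  refine squeeze_zero (fun n => by positivity) (fun n => ?_)
    (by simpa using hB.add (tendsto_const_div_atTop_nhds_zero_nat (K : ℝ)))
  rw [← add_div]
  gcongr
  exact_mod_cast h n

lemma hasDensity_zero_mono {A B : Set ℕ} (h : A ⊆ B) (hB : HasDensity B 0) : HasDensity A 0 :=
  hasDensity_zero_of_count_le_add hB 0 fun _ => Nat.count_mono_left fun _ _ hk => h hk

lemma count_union_le (A B : Set ℕ) (n : ℕ) :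
    Nat.count (· ∈ A ∪ B) n ≤ Nat.count (· ∈ A) n + Nat.count (· ∈ B) n := by
  induction n with
  | zero => simp
  | succ n ih =>
    rw [Nat.count_succ, Nat.count_succ, Nat.count_succ]
    split_ifs <;> first | omega | (simp only [mem_union] at *; tauto)

lemma hasDensity_zero_union {A B : Set ℕ} (hA : HasDensity A 0) (hB : HasDensity B 0) :
    HasDensity (A ∪ B) 0 := by
  rw [hasDensity_zero_iff_count] at hA hB ⊢
  refine squeeze_zero (fun n => by positivity) (fun n => ?_) (by simpa using hA.add hB)
  rw [← add_div]
  gcongr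
  exact_mod_cast count_union_le A B n

lemma hasDensity_zero_preimage_add {B : Set ℕ} (hB : HasDensity B 0) (i : ℕ) :
    HasDensity ((· + i) ⁻¹' B) 0 := by
  refine hasDensity_zero_of_count_le_add hB i fun n => ?_
  have hshift := Nat.count_add' (· ∈ B) n i
  have htail := Nat.count_add (· ∈ B) n i
  have hle := Nat.count_le (p := fun k => n + k ∈ B) (n := i)
  simp only [mem_preimage]
  omega

lemma hasDensity_zero_image_add {B : Set ℕ} (hB : HasDensity B 0) (i : ℕ) :
    HasDensity ((· + i) '' B) 0 := by
  refine hasDensity_zero_of_count_le_add hB 0 fun n => ?_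
  have hshift := Nat.count_add' (· ∈ (· + i) '' B) n i
  have hlow : Nat.count (· ∈ (· + i) '' B) i = 0 :=
    Nat.count_iff_forall_not.2 fun m hm ⟨k, _, hk⟩ => by simp only at hk; omega
  have hmono : Nat.count (fun k => k + i ∈ (· + i) '' B) n ≤ Nat.count (· ∈ B) n :=
    Nat.count_mono_left fun k _ hk => (add_left_injective i).mem_set_image.1 hk
  have := Nat.count_monotone (· ∈ (· + i) '' B) (Nat.le_add_right n i)
  omega

lemma hasDensity_zero_setOf_exists_add_mem {B : Set ℕ} (hB : HasDensity B 0) (k : ℕ) :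
    HasDensity {n | ∃ i < k, n + i ∈ B} 0 := by
  induction k with
  | zero => exact hasDensity_zero_mono (fun _ ⟨i, hi, _⟩ => absurd hi (Nat.not_lt_zero i)) hB
  | succ k ih =>
    refine hasDensity_zero_mono (fun n ⟨i, hi, hiB⟩ => ?_)
      (hasDensity_zero_union ih (hasDensity_zero_preimage_add hB k))
    rcases Nat.lt_succ_iff_lt_or_eq.1 hi with hi | rfl
    exacts [Or.inl ⟨i, hi, hiB⟩, Or.inr hiB]

lemma count_diff_image_succ_le (S : Set ℕ) (n : ℕ) :
    Nat.count (· ∈ S \ (· + 1) '' S) n ≤ Nat.count (· ∈ (· + 1) '' S \ S) n + 1 := by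
  -- both sides count `S ∪ (S + 1)` below `n`
  have hbalance : ∀ n, Nat.count (· ∈ S \ (· + 1) '' S) n + Nat.count (· ∈ (· + 1) '' S) n =
      Nat.count (· ∈ (· + 1) '' S \ S) n + Nat.count (· ∈ S) n := by
    intro n
    induction n with
    | zero => simp
    | succ n ih =>
      rw [Nat.count_succ, Nat.count_succ, Nat.count_succ, Nat.count_succ]
      split_ifs <;> first | omega | (simp only [Set.mem_sdiff] at *; tauto)
  have hshift : Nat.count (· ∈ (· + 1) '' S) (n + 1) = Nat.count (· ∈ S) n := by
    simp [Nat.count_succ']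
  have := Nat.count_succ (· ∈ (· + 1) '' S) n
  have := hbalance n
  split_ifs at * <;> omega

lemma hasDensity_zero_diff_image_succ {S : Set ℕ} (h : HasDensity ((· + 1) '' S \ S) 0) :
    HasDensity (S \ (· + 1) '' S) 0 :=
  hasDensity_zero_of_count_le_add h 1 (count_diff_image_succ_le S)

end Density

lemma add_mem_iff_of_forall_notMem_symmDiff {S : Set ℕ} {n k : ℕ}
    (h : ∀ i < k, n + i + 1 ∉ ((· + 1) '' S) ∆ S) : ∀ i ≤ k, (n + i ∈ S ↔ n ∈ S) := by
  intro i hi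
  induction i with
  | zero => rfl
  | succ i ih =>
    have hstep := h i (by omega)
    rw [Set.mem_symmDiff, (add_left_injective 1).mem_set_image] at hstep
    rw [← ih (by omega), ← add_assoc]
    tauto

namespace IsArithmeticSeq

variable {a : ℕ → ℕ}

lemma pos (ha : IsArithmeticSeq a) (n : ℕ) : 0 < a n :=
  Nat.lt_of_lt_of_le Nat.one_pos (ha.1 ▸ ha.2.1.monotone n.zero_le)

lemma dvd_of_le (ha : IsArithmeticSeq a) {m n : ℕ} (h : m ≤ n) : a m ∣ a n := by
  induction n, h using Nat.le_induction with
  | base => exact dvd_rfl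
  | succ n _ ih => exact ih.trans (ha.2.2 n)

lemma natCast_div (ha : IsArithmeticSeq a) (n : ℕ) : ((a (n + 1) / a n : ℕ) : ℝ) = qr a (n + 1) :=
  Nat.cast_div (ha.2.2 n) (Nat.cast_ne_zero.2 (ha.pos n).ne')

lemma two_le_qr (ha : IsArithmeticSeq a) (n : ℕ) : 2 ≤ qr a (n + 1) := by
  obtain ⟨k, hk⟩ := ha.2.2 n
  have hlt : a n < a n * k := hk ▸ ha.2.1 n.lt_succ_self
  rw [← ha.natCast_div, hk, Nat.mul_div_cancel_left _ (ha.pos n)]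
  exact_mod_cast (lt_mul_iff_one_lt_right (ha.pos n)).1 hlt

end IsArithmeticSeq

lemma IsCanonicalRep.digit_add_one_le_qr {a c : ℕ → ℕ} (hc : IsCanonicalRep a c)
    (ha : IsArithmeticSeq a) (n : ℕ) : (c (n + 1) : ℝ) + 1 ≤ qr a (n + 1) := by
  rw [← ha.natCast_div]
  exact_mod_cast hc.2.1 (n + 1) n.succ_pos

lemma digit_add_one_eq_qr_of_mem_suppqRep {a c : ℕ → ℕ} (ha : IsArithmeticSeq a) {n : ℕ}
    (h : n + 1 ∈ suppqRep a c) : (c (n + 1) : ℝ) + 1 = qr a (n + 1) := by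
  rw [← ha.natCast_div]
  exact_mod_cast h.2

lemma AddCircle.norm_coe_one_eq_min {t : ℝ} (h0 : 0 ≤ t) (h1 : t ≤ 1) :
    ‖(t : AddCircle (1 : ℝ))‖ = min t (1 - t) := by
  rcases le_total t (1 / 2) with h | h
  · have habs : |t| ≤ |(1 : ℝ)| / 2 := by rwa [abs_of_nonneg h0, abs_one]
    rw [min_eq_left (by linarith), (AddCircle.norm_coe_eq_abs_iff (p := 1) one_ne_zero).2 habs,
      abs_of_nonneg h0]
  · have hshift : (t : AddCircle (1 : ℝ)) = ((t - 1 : ℝ) : AddCircle (1 : ℝ)) := by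
      rw [AddCircle.coe_sub, AddCircle.coe_period, sub_zero]
    have habs : |t - 1| ≤ |(1 : ℝ)| / 2 := by
      rw [abs_of_nonpos (by linarith), abs_one]
      linarith
    rw [min_eq_right (by linarith), hshift,
      (AddCircle.norm_coe_eq_abs_iff (p := 1) one_ne_zero).2 habs, abs_of_nonpos (by linarith)]
    ring

lemma le_half_pow_of_le_half_succ {u : ℕ → ℝ} (hu : ∀ n, u n ≤ 1) {m k : ℕ}
    (h : ∀ i < k, u (m + i) ≤ u (m + i + 1) / 2) : u m ≤ (1 / 2) ^ k := by
  induction k generalizing m with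
  | zero => simpa using hu m
  | succ k ih =>
    have htail : u (m + 1) ≤ (1 / 2) ^ k := ih fun i hi => by
      simpa only [add_assoc, add_comm 1 i] using h (i + 1) (by omega)
    have hhead := h 0 k.succ_pos
    rw [add_zero] at hhead
    rw [pow_succ]
    linarith

noncomputable def scaledTail (a c : ℕ → ℕ) (m : ℕ) : ℝ :=
  a m * ∑' k, (c (m + 1 + k) : ℝ) / a (m + 1 + k)

section ScaledTail

variable {a c : ℕ → ℕ}

lemma digit_div_le_one_div_sub_one_div (ha : IsArithmeticSeq a) (hc : IsCanonicalRep a c)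
    (n : ℕ) :
    (c (n + 1) : ℝ) / a (n + 1) ≤ 1 / a n - 1 / a (n + 1) := by
  have h := hc.digit_add_one_le_qr ha n
  have h0 : (0 : ℝ) < a n := by exact_mod_cast ha.pos n
  have h1 : (0 : ℝ) < a (n + 1) := by exact_mod_cast ha.pos (n + 1)
  rw [qr, Nat.add_sub_cancel, le_div_iff₀ h0] at h
  rw [div_sub_div _ _ h0.ne' h1.ne', div_le_div_iff₀ h1 (by positivity)]
  nlinarith [mul_le_mul_of_nonneg_right h h1.le]

lemma sum_range_digit_div_le_one_div_sub (ha : IsArithmeticSeq a) (hc : IsCanonicalRep a c)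
    (m K : ℕ) :
    ∑ i ∈ Finset.range K, (c (m + 1 + i) : ℝ) / a (m + 1 + i) ≤ 1 / a m - 1 / a (m + K) := by
  induction K with
  | zero => simp
  | succ K ih =>
    rw [Finset.sum_range_succ, show m + 1 + K = m + K + 1 by omega,
      show m + (K + 1) = m + K + 1 by omega]
    linarith [digit_div_le_one_div_sub_one_div ha hc (m + K)]

lemma sum_range_digit_div_le_one_div (ha : IsArithmeticSeq a) (hc : IsCanonicalRep a c)
    (m K : ℕ) :
    ∑ i ∈ Finset.range K, (c (m + 1 + i) : ℝ) / a (m + 1 + i) ≤ 1 / a m :=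
  (sum_range_digit_div_le_one_div_sub ha hc m K).trans (sub_le_self _ (by positivity))

lemma summable_digit_div (ha : IsArithmeticSeq a) (hc : IsCanonicalRep a c) (m : ℕ) :
    Summable fun k => (c (m + 1 + k) : ℝ) / a (m + 1 + k) :=
  summable_of_sum_range_le (fun _ => by positivity) (sum_range_digit_div_le_one_div ha hc m)

lemma scaledTail_nonneg (a c : ℕ → ℕ) (m : ℕ) : 0 ≤ scaledTail a c m :=
  mul_nonneg (Nat.cast_nonneg _) (tsum_nonneg fun _ => by positivity)

lemma scaledTail_le_one (ha : IsArithmeticSeq a) (hc : IsCanonicalRep a c) (m : ℕ) :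
    scaledTail a c m ≤ 1 := by
  have h0 : (0 : ℝ) < a m := by exact_mod_cast ha.pos m
  rw [scaledTail]
  calc _ ≤ (a m : ℝ) * (1 / a m) := by
        gcongr
        exact Real.tsum_le_of_sum_range_le (fun _ => by positivity)
          (sum_range_digit_div_le_one_div ha hc m)
    _ = 1 := by field_simp

lemma qr_mul_scaledTail (ha : IsArithmeticSeq a) (hc : IsCanonicalRep a c) (m : ℕ) :
    qr a (m + 1) * scaledTail a c m = c (m + 1) + scaledTail a c (m + 1) := by
  have h0 : (a m : ℝ) ≠ 0 := by exact_mod_cast (ha.pos m).ne'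
  have h1 : (a (m + 1) : ℝ) ≠ 0 := by exact_mod_cast (ha.pos (m + 1)).ne'
  simp only [scaledTail, qr, Nat.add_sub_cancel]
  rw [(summable_digit_div ha hc m).tsum_eq_zero_add, add_zero]
  rw [tsum_congr fun k => by rw [show m + 1 + (k + 1) = m + 1 + 1 + k by omega]]
  field_simp

lemma nsmul_coe_tsum_eq_scaledTail (ha : IsArithmeticSeq a) (hc : IsCanonicalRep a c) (m : ℕ) :
    a m • ((∑' n, (c n : ℝ) / a n : ℝ) : AddCircle (1 : ℝ)) = scaledTail a c m := by
  have hsum : Summable fun n => (c n : ℝ) / a n :=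
    (summable_nat_add_iff 1).1
      ((summable_digit_div ha hc 0).congr fun k => by rw [zero_add, add_comm])
  obtain ⟨H, hH⟩ : ∃ H : ℕ, (a m : ℝ) * ∑ k ∈ Finset.range (m + 1), (c k : ℝ) / a k = H := by
    refine ⟨∑ k ∈ Finset.range (m + 1), a m / a k * c k, ?_⟩
    rw [Finset.mul_sum]
    push_cast
    refine Finset.sum_congr rfl fun k hk => ?_
    have hk0 : (a k : ℝ) ≠ 0 := by exact_mod_cast (ha.pos k).ne'
    rw [Nat.cast_div (ha.dvd_of_le (Finset.mem_range_succ_iff.1 hk)) hk0]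
    field_simp
  have hH0 : ((H : ℝ) : AddCircle (1 : ℝ)) = 0 := by
    rw [← nsmul_one, AddCircle.coe_nsmul, AddCircle.coe_period, smul_zero]
  rw [← AddCircle.coe_nsmul, nsmul_eq_mul, ← hsum.sum_add_tsum_nat_add (m + 1), mul_add, hH,
    AddCircle.coe_add, hH0, zero_add, scaledTail]
  simp only [add_comm _ (m + 1)]

lemma scaledTail_le_half_of_digit_eq_zero (ha : IsArithmeticSeq a) (hc : IsCanonicalRep a c)
    {m : ℕ} (h : c (m + 1) = 0) : scaledTail a c m ≤ scaledTail a c (m + 1) / 2 := by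
  have hrec := qr_mul_scaledTail ha hc m
  rw [h, Nat.cast_zero, zero_add] at hrec
  nlinarith [ha.two_le_qr m, scaledTail_nonneg a c m]

lemma one_sub_scaledTail_le_half_of_mem_suppqRep (ha : IsArithmeticSeq a)
    (hc : IsCanonicalRep a c) {m : ℕ} (h : m + 1 ∈ suppqRep a c) :
    1 - scaledTail a c m ≤ (1 - scaledTail a c (m + 1)) / 2 := by
  have hrec := qr_mul_scaledTail ha hc m
  have hq := ha.two_le_qr m
  rw [← digit_add_one_eq_qr_of_mem_suppqRep ha h] at hrec hq
  nlinarith [scaledTail_le_one ha hc m]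

lemma scaledTail_le_half_pow_of_digits_eq_zero (ha : IsArithmeticSeq a)
    (hc : IsCanonicalRep a c) {m k : ℕ} (h : ∀ i < k, c (m + i + 1) = 0) :
    scaledTail a c m ≤ (1 / 2) ^ k :=
  le_half_pow_of_le_half_succ (scaledTail_le_one ha hc) fun i hi =>
    scaledTail_le_half_of_digit_eq_zero ha hc (h i hi)

lemma one_sub_scaledTail_le_half_pow_of_mem_suppqRep (ha : IsArithmeticSeq a)
    (hc : IsCanonicalRep a c) {m k : ℕ} (h : ∀ i < k, m + i + 1 ∈ suppqRep a c) :
    1 - scaledTail a c m ≤ (1 / 2) ^ k :=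
  le_half_pow_of_le_half_succ (u := fun n => 1 - scaledTail a c n)
    (fun n => by linarith [scaledTail_nonneg a c n]) fun i hi =>
    one_sub_scaledTail_le_half_of_mem_suppqRep ha hc (h i hi)

lemma inv_two_mul_qr_le_min_scaledTail (ha : IsArithmeticSeq a) (hc : IsCanonicalRep a c)
    {m : ℕ} (hpos : c (m + 1) ≠ 0)
    (hgap : c (m + 1) + scaledTail a c (m + 1) + 1 / 2 ≤ qr a (m + 1)) :
    (2 * qr a (m + 1))⁻¹ ≤ min (scaledTail a c m) (1 - scaledTail a c m) := by
  have hq : 0 < 2 * qr a (m + 1) := by linarith [ha.two_le_qr m]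
  have hrec := qr_mul_scaledTail ha hc m
  have hnext := scaledTail_nonneg a c (m + 1)
  have hdigit : (1 : ℝ) ≤ c (m + 1) := by exact_mod_cast Nat.one_le_iff_ne_zero.2 hpos
  rw [le_min_iff, inv_le_iff_one_le_mul₀' hq, inv_le_iff_one_le_mul₀' hq]
  constructor <;> nlinarith

end ScaledTail

section Torsion

variable {a c : ℕ → ℕ}

lemma hasDensity_of_statNhdTendsto_scaledTail (ha : IsArithmeticSeq a) (hc : IsCanonicalRep a c)
    (hqb : QBounded a (suppRep c))
    (h : StatNhdTendsto (fun n => (scaledTail a c n : AddCircle (1 : ℝ))) 0) :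
    HasDensity (((fun n => n + 1) '' suppRep c) \ suppRep c) 0 ∧
      HasDensity (suppRep c \ suppqRep a c) 0 := by
  obtain ⟨M, hM⟩ := hqb
  set ε : ℝ := (2 * (M + 1))⁻¹
  set far := {n | ε ≤ min (scaledTail a c n) (1 - scaledTail a c n)}
  have hfar : HasDensity far 0 := by
    refine hasDensity_zero_mono ?_ (h _ (Metric.ball_mem_nhds 0 (by positivity : 0 < ε)))
    intro n hn hball
    rw [Metric.mem_ball, dist_zero_right, AddCircle.norm_coe_one_eq_min (scaledTail_nonneg a c n)
      (scaledTail_le_one ha hc n)] at hball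
    exact hn.not_gt hball
  have hmem_far : ∀ n, n + 1 ∈ suppRep c →
      c (n + 1) + scaledTail a c (n + 1) + 1 / 2 ≤ qr a (n + 1) → n ∈ far := by
    intro n hn hgap
    have hqM : qr a (n + 1) ≤ M := by
      rw [← ha.natCast_div]
      exact_mod_cast hM (n + 1) hn
    refine le_trans ?_ (inv_two_mul_qr_le_min_scaledTail ha hc hn.2 hgap)
    exact inv_anti₀ (by linarith [ha.two_le_qr n]) (by linarith)
  constructor
  · refine hasDensity_zero_mono ?_ (hasDensity_zero_image_add hfar 2)
    rintro _ ⟨⟨n, hn, rfl⟩, hnext⟩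
    obtain ⟨p, rfl⟩ : ∃ p, n = p + 1 := ⟨n - 1, by have := hn.1; omega⟩
    have hzero : c (p + 1 + 1) = 0 := by
      by_contra hne
      exact hnext ⟨Nat.le_add_left 1 _, hne⟩
    have hhalf := scaledTail_le_half_of_digit_eq_zero ha hc hzero
    refine ⟨p, hmem_far p hn ?_, rfl⟩
    linarith [hc.digit_add_one_le_qr ha p, scaledTail_le_one ha hc (p + 1 + 1)]
  · refine hasDensity_zero_mono ?_ (hasDensity_zero_image_add hfar 1)
    rintro n ⟨hn, hnq⟩
    obtain ⟨p, rfl⟩ : ∃ p, n = p + 1 := ⟨n - 1, by have := hn.1; omega⟩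
    have hgap : c (p + 1) + 2 ≤ a (p + 1) / a p := by
      have hlt := hc.2.1 (p + 1) (by omega)
      have hne : c (p + 1) + 1 ≠ a (p + 1) / a (p + 1 - 1) := fun heq => hnq ⟨by omega, heq⟩
      rw [Nat.add_sub_cancel] at hlt hne
      omega
    have hgap' : (c (p + 1) : ℝ) + 2 ≤ qr a (p + 1) := by
      rw [← ha.natCast_div]
      exact_mod_cast hgap
    exact ⟨p, hmem_far p hn (by linarith [scaledTail_le_one ha hc (p + 1)]), rfl⟩

lemma statNhdTendsto_scaledTail_of_hasDensity (ha : IsArithmeticSeq a) (hc : IsCanonicalRep a c)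
    (hends : HasDensity (((fun n => n + 1) '' suppRep c) \ suppRep c) 0)
    (hmax : HasDensity (suppRep c \ suppqRep a c) 0) :
    StatNhdTendsto (fun n => (scaledTail a c n : AddCircle (1 : ℝ))) 0 := by
  set S := suppRep c
  set E := (S \ suppqRep a c) ∪ (((· + 1) '' S) ∆ S)
  have hE : HasDensity E 0 := hasDensity_zero_union hmax (by
    rw [Set.symmDiff_def]
    exact hasDensity_zero_union hends (hasDensity_zero_diff_image_succ hends))
  intro U hU
  obtain ⟨ε, hε, hball⟩ := Metric.mem_nhds_iff.1 hU
  obtain ⟨k, hk⟩ := exists_pow_lt_of_lt_one hε one_half_lt_one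
  refine hasDensity_zero_mono (fun n hn => ?_)
    (hasDensity_zero_setOf_exists_add_mem (hasDensity_zero_preimage_add hE 1) k)
  by_contra hwin
  have hwin : ∀ i < k, n + i + 1 ∉ E := fun i hi hmem => hwin ⟨i, hi, hmem⟩
  refine hn (hball ?_)
  rw [Metric.mem_ball, dist_zero_right, AddCircle.norm_coe_one_eq_min (scaledTail_nonneg a c n)
    (scaledTail_le_one ha hc n)]
  refine lt_of_le_of_lt ?_ hk
  have hrun := add_mem_iff_of_forall_notMem_symmDiff fun i hi hmem => hwin i hi (Or.inr hmem)
  by_cases hnS : n ∈ S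
  · refine (min_le_right _ _).trans
      (one_sub_scaledTail_le_half_pow_of_mem_suppqRep ha hc fun i hi => ?_)
    by_contra hnq
    exact hwin i hi (Or.inl ⟨(hrun (i + 1) hi).2 hnS, hnq⟩)
  · refine (min_le_left _ _).trans
      (scaledTail_le_half_pow_of_digits_eq_zero ha hc fun i hi => ?_)
    by_contra hne
    exact hnS ((hrun (i + 1) hi).1 ⟨by omega, hne⟩)

end Torsion

/-- Corollary: if `supp(x)` is `q`-bounded, then `x` is a topological `s`-torsion
element iff `d((supp(x)+1) \ supp(x)) = 0` and `d(supp(x) \ supp_q(x)) = 0`. -/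
theorem sTorsion_iff_of_qBounded_supp (a c : ℕ → ℕ) (ha : IsArithmeticSeq a)
    (hc : IsCanonicalRep a c) (x : AddCircle (1 : ℝ))
    (hx : x = ((∑' n, (c n : ℝ) / (a n : ℝ) : ℝ) : AddCircle (1 : ℝ)))
    (hqb : QBounded a (suppRep c)) :
    StatNhdTendsto (fun n => a n • x) (0 : AddCircle (1 : ℝ)) ↔
      HasDensity (((fun n => n + 1) '' suppRep c) \ suppRep c) 0 ∧
        HasDensity (suppRep c \ suppqRep a c) 0 := by
  have hseq : (fun n => a n • x) = fun n => ((scaledTail a c n : ℝ) : AddCircle (1 : ℝ)) := by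
    funext n
    rw [hx, nsmul_coe_tsum_eq_scaledTail ha hc]
  rw [hseq]
  exact ⟨hasDensity_of_statNhdTendsto_scaledTail ha hc hqb,
    fun h => statNhdTendsto_scaledTail_of_hasDensity ha hc h.1 h.2⟩
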